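/- The sequence of medians (m_n)_{n≥4} associated to an M&m sequence started from (0, x, 1) with 0 < x < 1 is monotone: either m_{n+1} ≥ m_n for all n ≥ 4, or m_{n+1} ≤ m_n for all n ≥ 4. In fact m_{n+1} ≥ m_n whenever x_{n+1} ≥ m_n and m_{n+1} ≤ m_n whenever x_{n+1} ≤ m_n. -/

import Mathlib

open Finset Filter

/-- The median of a finite list of reals: the middle element of the sorted list
if the length is odd, and the average of the two middle elements if it is even. -/
noncomputable def med (l : List ℝ) : ℝ :=
  let s := l.insertionSort (· ≤ ·)
  if l.length % 2 = 1 then s.getD (l.length / 2) 0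
  else (s.getD (l.length / 2 - 1) 0 + s.getD (l.length / 2) 0) / 2

/-- The list of the first `n` terms `X 1, …, X n`. -/
def firstTerms (X : ℕ → ℝ) (n : ℕ) : List ℝ := (List.range' 1 n).map X

/-- The median `m_n` of the first `n` terms. -/
noncomputable def medn (X : ℕ → ℝ) (n : ℕ) : ℝ := med (firstTerms X n)

/-- `X` is the M&m sequence generated from the starting triple `(a, b, c)`:
`x_n = n · med(x_1,…,x_{n-1}) − (x_1 + ⋯ + x_{n-1})` for `n ≥ 4`. -/
def IsMnM (a b c : ℝ) (X : ℕ → ℝ) : Prop :=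
  X 1 = a ∧ X 2 = b ∧ X 3 = c ∧
  ∀ n, 4 ≤ n → X n = n * medn X (n - 1) - ∑ j ∈ Finset.Icc 1 (n - 1), X j

/-!
Appending a point on one side of the median moves the median weakly towards that side; this is
a counting argument on the sorted list. For an M&m sequence the mean of the first `n + 1` terms
is `m_n`, so `x_{n+2} - m_{n+1} = (n + 1) (m_{n+1} - m_n)`: the point appended next lies on the
side towards which the median has just moved. Hence the sign of `m_4 - m_3` propagates.
-/

namespace List

variable {α : Type*}

theorem SortedLE.countP_le_iff_eq_false [Preorder α] {s : List α} (hs : s.SortedLE)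
    {p : α → Bool} (hp : ∀ ⦃a b⦄, a ≤ b → p b → p a) {k : ℕ} (hk : k < s.length) :
    s.countP p ≤ k ↔ p s[k] = false := by
  constructor
  · intro hc
    by_contra hpk
    have htake : (s.take (k + 1)).countP p = k + 1 := by
      rw [countP_eq_length.2, length_take, min_eq_left hk]
      intro a ha
      obtain ⟨j, hj, rfl⟩ := mem_take_iff_getElem.1 ha
      have hjk : j ≤ k := by omega
      exact hp (show s[j] ≤ s[k] from hs.getElem_le_getElem_of_le hjk) (by simpa using hpk)
    have htake_le := (take_sublist (k + 1) s).countP_le (p := p)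
    omega
  · intro hpk
    have hdrop : (s.drop k).countP p = 0 := countP_eq_zero.2 fun a ha hpa => by
      obtain ⟨j, hj, rfl⟩ := mem_drop_iff_getElem.1 ha
      simp [hp (hs.getElem_le_getElem_of_le (Nat.le_add_right k j)) hpa] at hpk
    calc s.countP p = (s.take k).countP p + (s.drop k).countP p := by
          rw [← countP_append, take_append_drop]
      _ ≤ k := by rw [hdrop]; exact countP_le_length.trans (by simp)

variable [LinearOrder α] {l : List α} {m : α} {k : ℕ}

theorem le_getElem_insertionSort_iff (hk : k < (l.insertionSort (· ≤ ·)).length) :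
    m ≤ (l.insertionSort (· ≤ ·))[k] ↔ l.countP (· < m) ≤ k := by
  rw [← (l.perm_insertionSort (· ≤ ·)).countP_eq,
    sortedLE_insertionSort.countP_le_iff_eq_false
      (fun _ _ hab h => by simp at h ⊢; exact hab.trans_lt h) hk]
  simp

theorem getElem_insertionSort_le_iff (hk : k < (l.insertionSort (· ≤ ·)).length) :
    (l.insertionSort (· ≤ ·))[k] ≤ m ↔ k < l.countP (· ≤ m) := by
  rw [← (l.perm_insertionSort (· ≤ ·)).countP_eq, ← not_le,
    sortedLE_insertionSort.countP_le_iff_eq_false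
      (fun _ _ hab h => by simp at h ⊢; exact hab.trans h) hk]
  simp

end List

section Median

variable {l : List ℝ} {k : ℕ}

theorem med_of_length_eq_two_mul_add_one (hk : l.length = 2 * k + 1) :
    med l = (l.insertionSort (· ≤ ·))[k]'(by simp; omega) := by
  have hhalf : l.length / 2 = k := by omega
  rw [med, if_pos (by omega), hhalf, List.getD_eq_getElem]

theorem med_of_length_eq_two_mul_add_two (hk : l.length = 2 * k + 2) :
    med l = ((l.insertionSort (· ≤ ·))[k]'(by simp; omega)
      + (l.insertionSort (· ≤ ·))[k + 1]'(by simp; omega)) / 2 := by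
  have hhalf : l.length / 2 = k + 1 := by omega
  rw [med, if_neg (by omega), hhalf, Nat.add_sub_cancel, List.getD_eq_getElem,
    List.getD_eq_getElem]

theorem med_le_med_append_singleton {y : ℝ} (hy : med l ≤ y) : med l ≤ med (l ++ [y]) := by
  have hcount : (l ++ [y]).countP (· < med l) = l.countP (· < med l) := by
    simp [not_lt.2 hy]
  obtain ⟨k, hk | hk⟩ := Nat.even_or_odd' l.length
  · cases k with
    | zero =>
      rw [List.length_eq_zero_iff.1 hk] at hy ⊢
      rwa [List.nil_append, med_of_length_eq_two_mul_add_one (l := [y]) (k := 0) rfl]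
    | succ j =>
      have hsorted := l.sortedLE_insertionSort.getElem_le_getElem_of_le
        (hi := by simp; omega) (hj := by simp; omega) (Nat.le_succ j)
      have hmed : med l ≤ (l.insertionSort (· ≤ ·))[j + 1]'(by simp; omega) := by
        rw [med_of_length_eq_two_mul_add_two (by omega)]; linarith
      rw [List.le_getElem_insertionSort_iff] at hmed
      rw [med_of_length_eq_two_mul_add_one (l := l ++ [y]) (k := j + 1) (by simp; omega),
        List.le_getElem_insertionSort_iff, hcount]
      exact hmed
  · have hmed := (med_of_length_eq_two_mul_add_one hk).le
    rw [List.le_getElem_insertionSort_iff] at hmed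
    rw [med_of_length_eq_two_mul_add_two (l := l ++ [y]) (k := k) (by simp; omega)]
    have hlow : med l ≤ ((l ++ [y]).insertionSort (· ≤ ·))[k]'(by simp; omega) := by
      rw [List.le_getElem_insertionSort_iff, hcount]; exact hmed
    have hhigh : med l ≤ ((l ++ [y]).insertionSort (· ≤ ·))[k + 1]'(by simp; omega) := by
      rw [List.le_getElem_insertionSort_iff, hcount]; omega
    linarith

theorem med_append_singleton_le {y : ℝ} (hy : y ≤ med l) : med (l ++ [y]) ≤ med l := by
  have hcount : (l ++ [y]).countP (· ≤ med l) = l.countP (· ≤ med l) + 1 := by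
    simp [hy]
  obtain ⟨k, hk | hk⟩ := Nat.even_or_odd' l.length
  · cases k with
    | zero =>
      rw [List.length_eq_zero_iff.1 hk] at hy ⊢
      rwa [List.nil_append, med_of_length_eq_two_mul_add_one (l := [y]) (k := 0) rfl]
    | succ j =>
      have hsorted := l.sortedLE_insertionSort.getElem_le_getElem_of_le
        (hi := by simp; omega) (hj := by simp; omega) (Nat.le_succ j)
      have hmed : (l.insertionSort (· ≤ ·))[j]'(by simp; omega) ≤ med l := by
        rw [med_of_length_eq_two_mul_add_two (by omega)]; linarith
      rw [List.getElem_insertionSort_le_iff] at hmed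
      rw [med_of_length_eq_two_mul_add_one (l := l ++ [y]) (k := j + 1) (by simp; omega),
        List.getElem_insertionSort_le_iff, hcount]
      omega
  · have hmed := (med_of_length_eq_two_mul_add_one hk).ge
    rw [List.getElem_insertionSort_le_iff] at hmed
    rw [med_of_length_eq_two_mul_add_two (l := l ++ [y]) (k := k) (by simp; omega)]
    have hlow : ((l ++ [y]).insertionSort (· ≤ ·))[k]'(by simp; omega) ≤ med l := by
      rw [List.getElem_insertionSort_le_iff, hcount]; omega
    have hhigh : ((l ++ [y]).insertionSort (· ≤ ·))[k + 1]'(by simp; omega) ≤ med l := by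
      rw [List.getElem_insertionSort_le_iff, hcount]; omega
    linarith

end Median

section Medians

theorem firstTerms_succ (X : ℕ → ℝ) (n : ℕ) :
    firstTerms X (n + 1) = firstTerms X n ++ [X (n + 1)] := by
  rw [firstTerms, firstTerms, List.range'_1_concat, List.map_append]
  simp [Nat.add_comm]

variable {X : ℕ → ℝ} {n : ℕ}

theorem medn_le_medn_succ_of_medn_le (h : medn X n ≤ X (n + 1)) :
    medn X n ≤ medn X (n + 1) := by
  rw [medn, medn, firstTerms_succ]
  exact med_le_med_append_singleton h

theorem medn_succ_le_medn_of_le_medn (h : X (n + 1) ≤ medn X n) :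
    medn X (n + 1) ≤ medn X n := by
  rw [medn, medn, firstTerms_succ]
  exact med_append_singleton_le h

namespace IsMnM

variable {a b c : ℝ}

theorem sum_Icc_succ_eq_mul_medn (h : IsMnM a b c X) (hn : 3 ≤ n) :
    ∑ j ∈ Icc 1 (n + 1), X j = (n + 1) * medn X n := by
  rw [sum_Icc_succ_top (by omega), h.2.2.2 (n + 1) (by omega), Nat.add_sub_cancel]
  push_cast
  ring

theorem sub_medn_eq (h : IsMnM a b c X) (hn : 3 ≤ n) :
    X (n + 2) - medn X (n + 1) = (n + 1) * (medn X (n + 1) - medn X n) := by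
  have hrec := h.2.2.2 (n + 2) (by omega)
  rw [show n + 2 - 1 = n + 1 from rfl, h.sum_Icc_succ_eq_mul_medn hn] at hrec
  rw [hrec]
  push_cast
  ring

theorem medn_succ_le_medn_succ_succ (h : IsMnM a b c X) (hn : 3 ≤ n)
    (hle : medn X n ≤ medn X (n + 1)) : medn X (n + 1) ≤ medn X (n + 2) := by
  refine medn_le_medn_succ_of_medn_le ?_
  have hsub := h.sub_medn_eq hn
  have hprod : 0 ≤ ((n : ℝ) + 1) * (medn X (n + 1) - medn X n) := by
    apply mul_nonneg <;> [positivity; linarith]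
  linarith

theorem medn_succ_succ_le_medn_succ (h : IsMnM a b c X) (hn : 3 ≤ n)
    (hle : medn X (n + 1) ≤ medn X n) : medn X (n + 2) ≤ medn X (n + 1) := by
  refine medn_succ_le_medn_of_le_medn ?_
  have hsub := h.sub_medn_eq hn
  have hprod : ((n : ℝ) + 1) * (medn X (n + 1) - medn X n) ≤ 0 := by
    apply mul_nonpos_of_nonneg_of_nonpos <;> [positivity; linarith]
  linarith

theorem medn_le_medn_succ (h : IsMnM a b c X) (h34 : medn X 3 ≤ medn X 4) (hn : 3 ≤ n) :
    medn X n ≤ medn X (n + 1) := by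
  induction n, hn using Nat.le_induction with
  | base => exact h34
  | succ n hn ih => exact h.medn_succ_le_medn_succ_succ hn ih

theorem medn_succ_le_medn (h : IsMnM a b c X) (h43 : medn X 4 ≤ medn X 3) (hn : 3 ≤ n) :
    medn X (n + 1) ≤ medn X n := by
  induction n, hn using Nat.le_induction with
  | base => exact h43
  | succ n hn ih => exact h.medn_succ_succ_le_medn_succ hn ih

end IsMnM

end Medians

theorem medians_monotone_general (x : ℝ) (X : ℕ → ℝ)
    (h : IsMnM 0 x 1 X) :
    ((∀ n, 4 ≤ n → medn X n ≤ medn X (n + 1)) ∨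
      (∀ n, 4 ≤ n → medn X (n + 1) ≤ medn X n)) ∧
    (∀ n, 4 ≤ n →
      (medn X n ≤ X (n + 1) → medn X n ≤ medn X (n + 1)) ∧
      (X (n + 1) ≤ medn X n → medn X (n + 1) ≤ medn X n)) := by
  refine ⟨?_, fun n _ => ⟨medn_le_medn_succ_of_medn_le, medn_succ_le_medn_of_le_medn⟩⟩
  rcases le_total (medn X 3) (medn X 4) with h34 | h43
  · exact Or.inl fun n hn => h.medn_le_medn_succ h34 (by omega)
  · exact Or.inr fun n hn => h.medn_succ_le_medn h43 (by omega)

theorem medians_monotone (x : ℝ) (hx0 : 0 < x) (hx1 : x < 1) (X : ℕ → ℝ)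
    (h : IsMnM 0 x 1 X) :
    ((∀ n, 4 ≤ n → medn X n ≤ medn X (n + 1)) ∨
      (∀ n, 4 ≤ n → medn X (n + 1) ≤ medn X n)) ∧
    (∀ n, 4 ≤ n →
      (medn X n ≤ X (n + 1) → medn X n ≤ medn X (n + 1)) ∧
      (X (n + 1) ≤ medn X n → medn X (n + 1) ≤ medn X n)) :=
  medians_monotone_general x X h
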